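/- arXiv:1504.01365 — 9 statements merged into one kernel-verified Lean document; each statement's English description precedes it below -/
import Mathlib

section
/- For the squared-hinge-loss SVM dual problem, the objective admits a global error bound from the beginning: for every initial point α⁰ ∈ [0,∞)^n there exists a constant κ > 0 such that for every α ∈ [0,∞)^n with D(α) ≤ D(α⁰), the Euclidean distance from α to the set S of minimizers of D over [0,∞)^n satisfies dist(α, S) ≤ κ·‖T(α) − α‖₂, where T(α) = (T₁(α), …, Tₙ(α)) and Tₜ(α) is the coordinate-wise minimizer Tₜ(α) = argmin_{u ≥ 0} D(α + (u − αₜ)eₜ). -/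
/-!
With `A α = ∑ i, αᵢ • xᵢ` and `μ = 1 / (2C)`, the dual objective is the quadratic
`D α = ⟪H α, α⟫ / 2 - ⟪𝟙, α⟫` with `H = A†A + μ`, which is `μ`-strongly convex.
Let `γ` be a minimizer over the orthant, `e = α - γ` and `r = T α - α`. The one-dimensional
optimality conditions of the coordinates `Tₜ α`, tested at `γₜ`, and the variational inequality
of `γ`, tested at `T α`, add up to
`⟪H e, e⟫ ≤ -⟪H e, r⟫ - ∑ₜ Hₜₜ rₜ eₜ - ∑ₜ Hₜₜ rₜ² ≤ 2 ‖H‖ ‖e‖ ‖r‖`,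
so `μ ‖e‖² ≤ 2 ‖H‖ ‖e‖ ‖r‖`, i.e. `‖α - γ‖ ≤ (2 ‖H‖ / μ) ‖T α - α‖`.
-/

open scoped RealInnerProductSpace
open Filter Topology EuclideanSpace

lemma nonneg_of_forall_mul_add_mul_sq_nonneg {b c : ℝ}
    (h : ∀ s, 0 < s → s ≤ 1 → 0 ≤ b * s + c * s ^ 2) : 0 ≤ b := by
  have hlim : Tendsto (fun s => b + c * s) (𝓝[>] 0) (𝓝 b) := by
    have hcont : Continuous fun s : ℝ => b + c * s := by fun_prop
    simpa using (hcont.tendsto 0).mono_left nhdsWithin_le_nhds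
  refine ge_of_tendsto hlim ?_
  filter_upwards [Ioc_mem_nhdsGT one_pos] with s ⟨hs0, hs1⟩
  refine (mul_nonneg_iff_of_pos_left hs0).mp ?_
  linarith [h s hs0 hs1]

lemma le_div_mul_of_mul_sq_le {μ c a b : ℝ} (hμ : 0 < μ) (hc : 0 ≤ c) (ha : 0 ≤ a) (hb : 0 ≤ b)
    (h : μ * a ^ 2 ≤ c * a * b) : a ≤ c / μ * b := by
  rw [div_mul_eq_mul_div, le_div_iff₀ hμ]
  rcases ha.eq_or_lt with rfl | ha
  · rw [zero_mul]
    positivity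
  · exact le_of_mul_le_mul_right (by linarith) ha

section Quadratic

variable {E : Type*} [NormedAddCommGroup E] [InnerProductSpace ℝ E] {H : E →L[ℝ] E} (b : E)

variable (H) in
noncomputable def quadraticObjective (α : E) : ℝ := ⟪H α, α⟫ / 2 - ⟪b, α⟫

lemma quadraticObjective_add (hH : (H : E →ₗ[ℝ] E).IsSymmetric) (α w : E) :
    quadraticObjective H b (α + w)
      = quadraticObjective H b α + ⟪H α - b, w⟫ + ⟪H w, w⟫ / 2 := by
  have hsymm : ⟪H w, α⟫ = ⟪H α, w⟫ := (hH w α).trans (real_inner_comm _ _)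
  simp only [quadraticObjective, map_add, inner_add_left, inner_add_right, inner_sub_left]
  linarith

lemma IsMinOn.quadraticObjective_variational_inequality {K : Set E} {γ : E}
    (hmin : IsMinOn (quadraticObjective H b) K γ) (hH : (H : E →ₗ[ℝ] E).IsSymmetric)
    (hK : Convex ℝ K) (hγ : γ ∈ K) {β : E} (hβ : β ∈ K) : 0 ≤ ⟪H γ - b, β - γ⟫ := by
  refine nonneg_of_forall_mul_add_mul_sq_nonneg (c := ⟪H (β - γ), β - γ⟫ / 2)
    fun s hs0 hs1 => ?_
  have hle := isMinOn_iff.mp hmin _ (hK.add_smul_sub_mem hγ hβ ⟨hs0.le, hs1⟩)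
  rw [quadraticObjective_add b hH, map_smul, inner_smul_left, inner_smul_right,
    inner_smul_right, conj_trivial] at hle
  nlinarith

end Quadratic

section Orthant

variable {ι : Type*}

variable (ι) in
def nonnegOrthant : Set (EuclideanSpace ℝ ι) := {α | ∀ i, 0 ≤ α i}

lemma convex_nonnegOrthant : Convex ℝ (nonnegOrthant ι) := fun α hα β hβ a c ha hc _ i => by
  simp only [PiLp.add_apply, PiLp.smul_apply, smul_eq_mul]
  exact add_nonneg (mul_nonneg ha (hα i)) (mul_nonneg hc (hβ i))

lemma toLp_update_eq_add_smul_single [DecidableEq ι] (α : EuclideanSpace ℝ ι) (t : ι) (u : ℝ) :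
    WithLp.toLp 2 (Function.update α.ofLp t u) = α + (u - α t) • single t (1 : ℝ) := by
  ext i
  rcases eq_or_ne i t with rfl | h <;> simp [*]

variable [Fintype ι]

lemma abs_sum_mul_mul_le {h : ι → ℝ} {M : ℝ} (hM : 0 ≤ M) (hh : ∀ t, |h t| ≤ M)
    (a c : EuclideanSpace ℝ ι) : |∑ t, h t * a t * c t| ≤ M * (‖a‖ * ‖c‖) :=
  calc |∑ t, h t * a t * c t| ≤ ∑ t, |h t * a t * c t| := Finset.abs_sum_le_sum_abs _ _
    _ ≤ ∑ t, M * (|a t| * |c t|) := by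
      gcongr with t
      rw [abs_mul, abs_mul, mul_assoc]
      gcongr
      exact hh t
    _ = M * ∑ t, |a t| * |c t| := (Finset.mul_sum ..).symm
    _ ≤ M * (‖a‖ * ‖c‖) := by
      gcongr
      simpa [EuclideanSpace.norm_eq, sq_abs] using
        Real.sum_mul_le_sqrt_mul_sqrt Finset.univ (fun t => |a t|) (fun t => |c t|)

variable [DecidableEq ι]

def IsCoordinateMinimizer (f : EuclideanSpace ℝ ι → ℝ) (α τ : EuclideanSpace ℝ ι) : Prop :=
  ∀ t, 0 ≤ τ t ∧ ∀ u, 0 ≤ u →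
    f (WithLp.toLp 2 (Function.update α.ofLp t (τ t)))
      ≤ f (WithLp.toLp 2 (Function.update α.ofLp t u))

variable {H : EuclideanSpace ℝ ι →L[ℝ] EuclideanSpace ℝ ι} (b : EuclideanSpace ℝ ι)

lemma quadraticObjective_update
    (hH : (H : EuclideanSpace ℝ ι →ₗ[ℝ] EuclideanSpace ℝ ι).IsSymmetric)
    (α : EuclideanSpace ℝ ι) (t : ι) (u : ℝ) :
    quadraticObjective H b (WithLp.toLp 2 (Function.update α.ofLp t u))
      = quadraticObjective H b α + (u - α t) * (H α - b) t
        + (u - α t) ^ 2 / 2 * ⟪H (single t 1), single t 1⟫ := by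
  rw [toLp_update_eq_add_smul_single, quadraticObjective_add b hH, map_smul, inner_smul_left,
    inner_smul_right, inner_smul_right, inner_single_right, conj_trivial, conj_trivial]
  ring

lemma IsCoordinateMinimizer.variational_inequality {α τ : EuclideanSpace ℝ ι}
    (hτ : IsCoordinateMinimizer (quadraticObjective H b) α τ)
    (hH : (H : EuclideanSpace ℝ ι →ₗ[ℝ] EuclideanSpace ℝ ι).IsSymmetric) (t : ι)
    {z : ℝ} (hz : 0 ≤ z) :
    0 ≤ ((H α - b) t + ⟪H (single t 1), single t 1⟫ * (τ t - α t)) * (z - τ t) := by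
  obtain ⟨hτ0, hτmin⟩ := hτ t
  refine nonneg_of_forall_mul_add_mul_sq_nonneg
    (c := ⟪H (single t 1), single t 1⟫ / 2 * (z - τ t) ^ 2) fun s hs0 hs1 => ?_
  have hle := hτmin (τ t + s * (z - τ t)) (by nlinarith)
  rw [quadraticObjective_update b hH, quadraticObjective_update b hH] at hle
  nlinarith

lemma inner_self_le_of_isMinOn_of_isCoordinateMinimizer
    (hH : (H : EuclideanSpace ℝ ι →ₗ[ℝ] EuclideanSpace ℝ ι).IsSymmetric)
    {α γ τ : EuclideanSpace ℝ ι} (hγ : γ ∈ nonnegOrthant ι)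
    (hmin : IsMinOn (quadraticObjective H b) (nonnegOrthant ι) γ)
    (hτ : IsCoordinateMinimizer (quadraticObjective H b) α τ) :
    ⟪H (α - γ), α - γ⟫ ≤ -⟪H (α - γ), τ - α⟫
      - ∑ t, ⟪H (single t 1), single t 1⟫ * (τ - α) t * (α - γ) t
      - ∑ t, ⟪H (single t 1), single t 1⟫ * (τ - α) t ^ 2 := by
  set e := α - γ
  set r := τ - α
  set h : ι → ℝ := fun t => ⟪H (single t 1), single t 1⟫
  have hcoord : 0 ≤ ∑ t, ((H α - b) t + h t * r t) * (γ t - τ t) :=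
    Finset.sum_nonneg fun t _ => hτ.variational_inequality b hH t (hγ t)
  have hglob : 0 ≤ ⟪H γ - b, τ - γ⟫ :=
    hmin.quadraticObjective_variational_inequality b hH convex_nonnegOrthant hγ (hτ · |>.1)
  have hsplit : ∑ t, ((H α - b) t + h t * r t) * (γ t - τ t)
      = ⟪H α - b, γ - τ⟫ - ∑ t, h t * r t * e t - ∑ t, h t * r t ^ 2 := by
    rw [PiLp.inner_apply, sub_sub, ← Finset.sum_add_distrib, ← Finset.sum_sub_distrib]
    refine Finset.sum_congr rfl fun t _ => ?_
    simp only [e, r, PiLp.sub_apply, RCLike.inner_apply, conj_trivial]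
    ring
  have hgrad : ⟪H α - b, γ - τ⟫ + ⟪H γ - b, τ - γ⟫ = -⟪H e, e⟫ - ⟪H e, r⟫ := by
    have hHe : H e = (H α - b) - (H γ - b) := by rw [map_sub]; abel
    rw [hHe, show τ - γ = e + r by simp only [e, r]; abel,
      show γ - τ = -(e + r) by simp only [e, r]; abel]
    simp only [inner_neg_right, inner_sub_left, inner_add_right]
    ring
  linarith

theorem norm_sub_le_of_isMinOn_of_isCoordinateMinimizer
    (hH : (H : EuclideanSpace ℝ ι →ₗ[ℝ] EuclideanSpace ℝ ι).IsSymmetric) {μ : ℝ} (hμ : 0 < μ)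
    (hconv : ∀ w, μ * ‖w‖ ^ 2 ≤ ⟪H w, w⟫) {α γ τ : EuclideanSpace ℝ ι}
    (hγ : γ ∈ nonnegOrthant ι) (hmin : IsMinOn (quadraticObjective H b) (nonnegOrthant ι) γ)
    (hτ : IsCoordinateMinimizer (quadraticObjective H b) α τ) :
    ‖α - γ‖ ≤ 2 * ‖H‖ / μ * ‖τ - α‖ := by
  have hkey := inner_self_le_of_isMinOn_of_isCoordinateMinimizer b hH hγ hmin hτ
  set e := α - γ
  set r := τ - α
  set h : ι → ℝ := fun t => ⟪H (single t 1), single t 1⟫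
  have hh_nonneg (t : ι) : 0 ≤ h t :=
    (by positivity : 0 ≤ μ * ‖single t (1 : ℝ)‖ ^ 2).trans (hconv _)
  have hh_le (t : ι) : |h t| ≤ ‖H‖ :=
    (abs_real_inner_le_norm _ _).trans (by simpa using H.le_opNorm (single t 1))
  have hcross : -⟪H e, r⟫ ≤ ‖H‖ * (‖e‖ * ‖r‖) :=
    calc -⟪H e, r⟫ ≤ ‖H e‖ * ‖r‖ := (neg_le_abs _).trans (abs_real_inner_le_norm _ _)
      _ ≤ ‖H‖ * ‖e‖ * ‖r‖ := by gcongr; exact H.le_opNorm e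
      _ = ‖H‖ * (‖e‖ * ‖r‖) := mul_assoc ..
  have hdiag : -∑ t, h t * r t * e t ≤ ‖H‖ * (‖r‖ * ‖e‖) :=
    (neg_le_abs _).trans (abs_sum_mul_mul_le (norm_nonneg H) hh_le r e)
  have hsq : 0 ≤ ∑ t, h t * r t ^ 2 :=
    Finset.sum_nonneg fun t _ => mul_nonneg (hh_nonneg t) (sq_nonneg _)
  refine le_div_mul_of_mul_sq_le hμ (by positivity) (norm_nonneg e) (norm_nonneg r) ?_
  linarith [hconv e]

end Orthant

section Ridge

variable {E F : Type*} [NormedAddCommGroup E] [InnerProductSpace ℝ E] [CompleteSpace E]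
  [NormedAddCommGroup F] [InnerProductSpace ℝ F] [CompleteSpace F]

noncomputable def ridgeGram (A : E →L[ℝ] F) (μ : ℝ) : E →L[ℝ] E :=
  ContinuousLinearMap.adjoint A ∘L A + μ • ContinuousLinearMap.id ℝ E

variable (A : E →L[ℝ] F) (μ : ℝ)

lemma ridgeGram_apply_inner (v w : E) : ⟪ridgeGram A μ v, w⟫ = ⟪A v, A w⟫ + μ * ⟪v, w⟫ := by
  simp [ridgeGram, inner_add_left, inner_smul_left, ContinuousLinearMap.adjoint_inner_left]

lemma isSymmetric_ridgeGram : (ridgeGram A μ : E →ₗ[ℝ] E).IsSymmetric := fun v w => by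
  rw [ContinuousLinearMap.coe_coe, real_inner_comm (ridgeGram A μ w), ridgeGram_apply_inner,
    ridgeGram_apply_inner, real_inner_comm (A v), real_inner_comm v]

lemma ridgeGram_inner_self (w : E) : ⟪ridgeGram A μ w, w⟫ = ‖A w‖ ^ 2 + μ * ‖w‖ ^ 2 := by
  rw [ridgeGram_apply_inner, real_inner_self_eq_norm_sq, real_inner_self_eq_norm_sq]

lemma mul_norm_sq_le_ridgeGram_inner_self (w : E) : μ * ‖w‖ ^ 2 ≤ ⟪ridgeGram A μ w, w⟫ := by
  rw [ridgeGram_inner_self]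
  exact le_add_of_nonneg_left (sq_nonneg _)

end Ridge

section SquaredHinge

variable {ι F : Type*} [Fintype ι] [NormedAddCommGroup F] [InnerProductSpace ℝ F]

noncomputable def synthesisOperator (x : ι → F) : EuclideanSpace ℝ ι →L[ℝ] F :=
  ∑ i, (proj i).smulRight (x i)

lemma synthesisOperator_apply (x : ι → F) (α : EuclideanSpace ℝ ι) :
    synthesisOperator x α = ∑ i, α i • x i := by
  simp [synthesisOperator]

lemma squaredHingeDual_eq_quadraticObjective [CompleteSpace F] (x : ι → F) (C : ℝ)
    (α : EuclideanSpace ℝ ι) :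
    1 / 2 * ‖∑ i, α i • x i‖ ^ 2 + ∑ i, (α i ^ 2 / (4 * C) - α i)
      = quadraticObjective (ridgeGram (synthesisOperator x) (1 / (2 * C))) (WithLp.toLp 2 1) α := by
  have hb : ⟪WithLp.toLp 2 (1 : ι → ℝ), α⟫ = ∑ i, α i := by simp [PiLp.inner_apply]
  have hsq : ∑ i, α i ^ 2 / (4 * C) = 1 / (2 * C) * (∑ i, α i ^ 2) / 2 := by
    rw [Finset.mul_sum, Finset.sum_div]
    exact Finset.sum_congr rfl fun i _ => by ring
  rw [quadraticObjective, ridgeGram_inner_self, synthesisOperator_apply,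
    EuclideanSpace.real_norm_sq_eq, hb, Finset.sum_sub_distrib, hsq]
  ring

end SquaredHinge

theorem squared_hinge_svm_global_error_bound_from_beginning_general
    (n d : ℕ)
    (x : Fin n → EuclideanSpace ℝ (Fin d))
    (C : ℝ) (hC : 0 < C)
    (D : EuclideanSpace ℝ (Fin n) → ℝ)
    (hD : ∀ α, D α = (1 / 2) * ‖∑ i, α i • x i‖ ^ 2
        + ∑ i, ((α i) ^ 2 / (4 * C) - α i))
    (orthant : Set (EuclideanSpace ℝ (Fin n)))
    (horthant : orthant = {α | ∀ i, 0 ≤ α i})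
    (S : Set (EuclideanSpace ℝ (Fin n)))
    (hS : S = {α | α ∈ orthant ∧ ∀ β ∈ orthant, D α ≤ D β})
    (T : EuclideanSpace ℝ (Fin n) → EuclideanSpace ℝ (Fin n))
    (hT : ∀ α ∈ orthant, ∀ t : Fin n,
      0 ≤ T α t ∧
      (∀ u : ℝ, 0 ≤ u →
        D ((WithLp.equiv 2 (Fin n → ℝ)).symm (Function.update α t (T α t)))
          ≤ D ((WithLp.equiv 2 (Fin n → ℝ)).symm (Function.update α t u))) ∧
      (∀ u : ℝ, 0 ≤ u →
        D ((WithLp.equiv 2 (Fin n → ℝ)).symm (Function.update α t u))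
          ≤ D ((WithLp.equiv 2 (Fin n → ℝ)).symm (Function.update α t (T α t)))
            → u = T α t)) :
    ∀ α0 ∈ orthant, ∃ κ > (0 : ℝ), ∀ α ∈ orthant, D α ≤ D α0 →
      Metric.infDist α S ≤ κ * ‖T α - α‖ := by
  set μ := 1 / (2 * C)
  set H := ridgeGram (synthesisOperator x) μ
  have hμ : 0 < μ := by positivity
  have hDq : D = quadraticObjective H (WithLp.toLp 2 1) :=
    funext fun α => (hD α).trans (squaredHingeDual_eq_quadraticObjective x C α)
  subst hDq horthant
  intro _ _
  refine ⟨2 * ‖H‖ / μ + 1, by positivity, fun α hα _ => ?_⟩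
  rcases S.eq_empty_or_nonempty with rfl | ⟨γ, hγS⟩
  · rw [Metric.infDist_empty]
    positivity
  obtain ⟨hγ, hmin⟩ : γ ∈ _ ∧ _ := hS ▸ hγS
  have hbound := norm_sub_le_of_isMinOn_of_isCoordinateMinimizer _ (isSymmetric_ridgeGram _ μ) hμ
    (mul_norm_sq_le_ridgeGram_inner_self _ μ) hγ (isMinOn_iff.mpr hmin)
    (fun t => ⟨(hT α hα t).1, (hT α hα t).2.1⟩)
  calc Metric.infDist α S ≤ ‖α - γ‖ := dist_eq_norm α γ ▸ Metric.infDist_le_dist_of_mem hγS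
    _ ≤ 2 * ‖H‖ / μ * ‖T α - α‖ := hbound
    _ ≤ (2 * ‖H‖ / μ + 1) * ‖T α - α‖ := by gcongr; linarith

/-- Global error bound "from the beginning" for the squared-hinge-loss SVM dual objective
`D(α) = (1/2)‖∑ αᵢxᵢ‖² + ∑ (αᵢ²/(4C) − αᵢ)` over the nonnegative orthant: for every
initial point `α⁰ ≥ 0` there is `κ > 0` such that `dist(α, S) ≤ κ‖T(α) − α‖` for all
`α ≥ 0` with `D(α) ≤ D(α⁰)`, where `S` is the set of minimizers of `D` over the orthant
and `Tₜ(α)` is the (unique) coordinatewise minimizer `argmin_{u ≥ 0} D(α + (u − αₜ)eₜ)`. -/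
theorem squared_hinge_svm_global_error_bound_from_beginning
    (n d : ℕ) (hn : 1 ≤ n) (hd : 1 ≤ d)
    (x : Fin n → EuclideanSpace ℝ (Fin d))
    (hx : ∀ i, x i ≠ 0) (hx1 : ∀ i, ‖x i‖ ^ 2 ≤ 1)
    (C : ℝ) (hC : 0 < C)
    (D : EuclideanSpace ℝ (Fin n) → ℝ)
    (hD : ∀ α, D α = (1 / 2) * ‖∑ i, α i • x i‖ ^ 2
        + ∑ i, ((α i) ^ 2 / (4 * C) - α i))
    (orthant : Set (EuclideanSpace ℝ (Fin n)))
    (horthant : orthant = {α | ∀ i, 0 ≤ α i})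
    (S : Set (EuclideanSpace ℝ (Fin n)))
    (hS : S = {α | α ∈ orthant ∧ ∀ β ∈ orthant, D α ≤ D β})
    (T : EuclideanSpace ℝ (Fin n) → EuclideanSpace ℝ (Fin n))
    (hT : ∀ α ∈ orthant, ∀ t : Fin n,
      0 ≤ T α t ∧
      (∀ u : ℝ, 0 ≤ u →
        D ((WithLp.equiv 2 (Fin n → ℝ)).symm (Function.update α t (T α t)))
          ≤ D ((WithLp.equiv 2 (Fin n → ℝ)).symm (Function.update α t u))) ∧
      (∀ u : ℝ, 0 ≤ u →
        D ((WithLp.equiv 2 (Fin n → ℝ)).symm (Function.update α t u))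
          ≤ D ((WithLp.equiv 2 (Fin n → ℝ)).symm (Function.update α t (T α t)))
            → u = T α t)) :
    ∀ α0 ∈ orthant, ∃ κ > (0 : ℝ), ∀ α ∈ orthant, D α ≤ D α0 →
      Metric.infDist α S ≤ κ * ‖T α - α‖ :=
  squared_hinge_svm_global_error_bound_from_beginning_general n d x C hC D hD orthant horthant S hS
    T hT
end

section
/- (Backward error analysis, dual part.) Suppose α̂ ∈ ℝⁿ and ŵ ∈ ℝ^d are such that for every i, gᵢ(α̂ᵢ) is finite and −ŵᵀxᵢ is a subgradient of gᵢ at α̂ᵢ, i.e., gᵢ(z) ≥ gᵢ(α̂ᵢ) + (−ŵᵀxᵢ)·(z − α̂ᵢ) for all z ∈ ℝ. Let w̄ = ∑_{i=1}^n α̂ᵢ xᵢ and ε = w̄ − ŵ. Then α̂ is a global minimizer over ℝⁿ of the perturbed dual objective α ↦ D(α) − ∑_{i=1}^n αᵢ·(εᵀxᵢ). -/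
/-!
Summing the subgradient inequalities `gᵢ(α̂ᵢ) - ⟪ŵ, xᵢ⟫ (αᵢ - α̂ᵢ) ≤ gᵢ(αᵢ)` bounds the separable
part of the objective from below by `∑ gᵢ(α̂ᵢ) - ⟪ŵ, w - w̄⟫`, where `w = ∑ αᵢ xᵢ`. The quadratic
part satisfies the gradient inequality `½‖w̄‖² + ⟪w̄, w - w̄⟫ ≤ ½‖w‖²`, and the perturbation
`-⟪ε, ·⟫` with `ε = w̄ - ŵ` exactly turns the gradient `w̄` of the quadratic into `ŵ`, so the
two linear terms cancel.
-/

open scoped RealInnerProductSpace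

theorem EReal.coe_finset_sum {ι : Type*} (s : Finset ι) (f : ι → ℝ) :
    ((∑ i ∈ s, f i : ℝ) : EReal) = ∑ i ∈ s, (f i : EReal) :=
  map_sum (⟨⟨Real.toEReal, EReal.coe_zero⟩, EReal.coe_add⟩ : ℝ →+ EReal) f s

theorem EReal.sum_add_coe_sum_le_sum {ι : Type*} (s : Finset ι) {f g : ι → EReal} {a : ι → ℝ}
    (h : ∀ i ∈ s, f i + a i ≤ g i) :
    ∑ i ∈ s, f i + ((∑ i ∈ s, a i : ℝ) : EReal) ≤ ∑ i ∈ s, g i := by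
  rw [EReal.coe_finset_sum, ← Finset.sum_add_distrib]
  exact Finset.sum_le_sum h

section InnerProductSpace

variable {E : Type*} [NormedAddCommGroup E] [InnerProductSpace ℝ E]

theorem sum_mul_inner_eq_inner_sum_smul {ι : Type*} (s : Finset ι) (v : E) (β : ι → ℝ)
    (x : ι → E) : ∑ i ∈ s, β i * ⟪v, x i⟫ = ⟪v, ∑ i ∈ s, β i • x i⟫ := by
  simp only [inner_sum, real_inner_smul_right]

theorem half_norm_sq_add_inner_sub_le (u v : E) :
    1 / 2 * ‖u‖ ^ 2 + ⟪u, v - u⟫ ≤ 1 / 2 * ‖v‖ ^ 2 := by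
  have h := norm_sub_sq_real v u
  rw [inner_sub_right, real_inner_self_eq_norm_sq, real_inner_comm]
  nlinarith [sq_nonneg ‖v - u‖]

end InnerProductSpace

theorem backward_error_dual_general
    (n d : ℕ)
    (x : Fin n → EuclideanSpace ℝ (Fin d))
    (g : Fin n → ℝ → EReal)
    (D : (Fin n → ℝ) → EReal)
    (hD : ∀ α, D α = (((1 / 2) * ‖∑ i, α i • x i‖ ^ 2 : ℝ) : EReal) + ∑ i, g i (α i))
    (αhat : Fin n → ℝ) (what : EuclideanSpace ℝ (Fin d))
    (hsubgrad : ∀ i, ∀ z : ℝ,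
      g i (αhat i) + (((-⟪what, x i⟫) * (z - αhat i) : ℝ) : EReal) ≤ g i z)
    (wbar : EuclideanSpace ℝ (Fin d)) (hwbar : wbar = ∑ i, αhat i • x i)
    (ε : EuclideanSpace ℝ (Fin d)) (hε : ε = wbar - what) :
    ∀ α : Fin n → ℝ,
      D αhat + ((-(∑ i, αhat i * ⟪ε, x i⟫) : ℝ) : EReal)
        ≤ D α + ((-(∑ i, α i * ⟪ε, x i⟫) : ℝ) : EReal) := by
  intro α
  have hlin : ∑ i, -⟪what, x i⟫ * (α i - αhat i)
      = -⟪what, ∑ i, α i • x i - wbar⟫ := by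
    rw [inner_sub_right, hwbar, ← sum_mul_inner_eq_inner_sum_smul,
      ← sum_mul_inner_eq_inner_sum_smul, ← Finset.sum_sub_distrib, ← Finset.sum_neg_distrib]
    exact Finset.sum_congr rfl fun i _ => by ring
  set w := ∑ i, α i • x i
  have hsep : ∑ i, g i (αhat i) + ((-⟪what, w - wbar⟫ : ℝ) : EReal) ≤ ∑ i, g i (α i) := by
    rw [← hlin]
    exact EReal.sum_add_coe_sum_le_sum _ fun i _ => hsubgrad i (α i)
  have hquad : 1 / 2 * ‖wbar‖ ^ 2 - ⟪ε, wbar⟫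
      ≤ 1 / 2 * ‖w‖ ^ 2 - ⟪ε, w⟫ + -⟪what, w - wbar⟫ := by
    have hgrad := half_norm_sq_add_inner_sub_le wbar w
    rw [inner_sub_right] at hgrad
    rw [hε, inner_sub_left, inner_sub_left, inner_sub_right]
    linarith
  rw [hD, hD, ← hwbar, sum_mul_inner_eq_inner_sum_smul, sum_mul_inner_eq_inner_sum_smul, ← hwbar]
  calc ((1 / 2 * ‖wbar‖ ^ 2 : ℝ) : EReal) + ∑ i, g i (αhat i) + ((-⟪ε, wbar⟫ : ℝ) : EReal)
      = ∑ i, g i (αhat i) + ((1 / 2 * ‖wbar‖ ^ 2 - ⟪ε, wbar⟫ : ℝ) : EReal) := by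
        rw [sub_eq_add_neg, EReal.coe_add]; ac_rfl
    _ ≤ ∑ i, g i (αhat i) + ((1 / 2 * ‖w‖ ^ 2 - ⟪ε, w⟫ + -⟪what, w - wbar⟫ : ℝ) : EReal) := by
        gcongr
    _ = ((1 / 2 * ‖w‖ ^ 2 : ℝ) : EReal) + (∑ i, g i (αhat i) + ((-⟪what, w - wbar⟫ : ℝ) : EReal))
          + ((-⟪ε, w⟫ : ℝ) : EReal) := by
        rw [sub_eq_add_neg, EReal.coe_add, EReal.coe_add]; ac_rfl
    _ ≤ ((1 / 2 * ‖w‖ ^ 2 : ℝ) : EReal) + ∑ i, g i (α i) + ((-⟪ε, w⟫ : ℝ) : EReal) := by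
        gcongr

/-- Backward error analysis, dual part. If `−ŵᵀxᵢ` is a subgradient of the convex
function `gᵢ` at `α̂ᵢ` (with `gᵢ(α̂ᵢ)` finite) for every `i`, and
`w̄ = ∑ α̂ᵢxᵢ`, `ε = w̄ − ŵ`, then `α̂` globally minimizes the perturbed dual objective
`α ↦ D(α) − ∑ αᵢ·(εᵀxᵢ)`, where `D(α) = (1/2)‖∑ αᵢxᵢ‖² + ∑ gᵢ(αᵢ)`. -/
theorem backward_error_dual
    (n d : ℕ) (hn : 1 ≤ n) (hd : 1 ≤ d)
    (x : Fin n → EuclideanSpace ℝ (Fin d)) (hx : ∀ i, x i ≠ 0)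
    (g : Fin n → ℝ → EReal)
    (hgconv : ∀ i, ∀ a b θ : ℝ, 0 ≤ θ → θ ≤ 1 →
      g i (θ * a + (1 - θ) * b) ≤ (θ : EReal) * g i a + ((1 - θ : ℝ) : EReal) * g i b)
    (D : (Fin n → ℝ) → EReal)
    (hD : ∀ α, D α = (((1 / 2) * ‖∑ i, α i • x i‖ ^ 2 : ℝ) : EReal) + ∑ i, g i (α i))
    (αhat : Fin n → ℝ) (what : EuclideanSpace ℝ (Fin d))
    (hfin : ∀ i, g i (αhat i) ≠ ⊤ ∧ g i (αhat i) ≠ ⊥)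
    (hsubgrad : ∀ i, ∀ z : ℝ,
      g i (αhat i) + (((-⟪what, x i⟫) * (z - αhat i) : ℝ) : EReal) ≤ g i z)
    (wbar : EuclideanSpace ℝ (Fin d)) (hwbar : wbar = ∑ i, αhat i • x i)
    (ε : EuclideanSpace ℝ (Fin d)) (hε : ε = wbar - what) :
    ∀ α : Fin n → ℝ,
      D αhat + ((-(∑ i, αhat i * ⟪ε, x i⟫) : ℝ) : EReal)
        ≤ D α + ((-(∑ i, α i * ⟪ε, x i⟫) : ℝ) : EReal) :=
  backward_error_dual_general n d x g D hD αhat what hsubgrad wbar hwbar ε hε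
end

section
/- (Backward error analysis, primal part.) Suppose ℓᵢ : ℝ → ℝ are convex functions, gᵢ(α) := ℓᵢ*(−α) where ℓᵢ*(u) = sup_{z ∈ ℝ} (z·u − ℓᵢ(z)) is the convex conjugate (with values in ℝ ∪ {+∞}), and α̂ ∈ ℝⁿ, ŵ ∈ ℝ^d satisfy: for every i, gᵢ(α̂ᵢ) is finite and gᵢ(z) ≥ gᵢ(α̂ᵢ) + (−ŵᵀxᵢ)·(z − α̂ᵢ) for all z ∈ ℝ. Let w̄ = ∑_{i=1}^n α̂ᵢ xᵢ and ε = w̄ − ŵ. Then w̄ is a global minimizer over ℝ^d of the perturbed primal objective w ↦ (1/2)·‖w‖² + ∑_{i=1}^n ℓᵢ((w − ε)ᵀxᵢ). -/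
open scoped RealInnerProductSpace

/-- A convex function on `ℝ` has a subgradient at every point. -/
lemma exists_subgradient_of_convexOn (f : ℝ → ℝ) (hf : ConvexOn ℝ Set.univ f) (c : ℝ) :
    ∃ m : ℝ, ∀ u : ℝ, f c + m * (u - c) ≤ f u := by
  have hmono : ∀ u v : ℝ, u < c → c < v →
      (f c - f u) / (c - u) ≤ (f v - f c) / (v - c) := fun u v hu hv =>
    hf.slope_mono_adjacent trivial trivial hu hv
  set A : Set ℝ := (fun u => (f c - f u) / (c - u)) '' Set.Iio c with hA
  have hAne : A.Nonempty := ⟨(f c - f (c - 1)) / (c - (c - 1)), ⟨c - 1, by norm_num, rfl⟩⟩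
  have hbdd : BddAbove A := by
    refine ⟨(f (c + 1) - f c) / (c + 1 - c), ?_⟩
    rintro y ⟨u, hu, rfl⟩
    exact hmono u (c + 1) hu (by linarith)
  set m := sSup A with hm
  refine ⟨m, fun u => ?_⟩
  rcases lt_trichotomy u c with h | h | h
  · have h1 : (f c - f u) / (c - u) ≤ m := le_csSup hbdd ⟨u, h, rfl⟩
    have hcu : 0 < c - u := by linarith
    rw [div_le_iff₀ hcu] at h1
    nlinarith
  · simp [h]
  · have h1 : m ≤ (f u - f c) / (u - c) := by
      apply csSup_le hAne
      rintro y ⟨v, hv, rfl⟩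
      exact hmono v u hv h
    have hcu : 0 < u - c := by linarith
    rw [le_div_iff₀ hcu] at h1
    nlinarith

/-- Backward error analysis, primal part. With `gᵢ(α) = ℓᵢ*(−α)` (convex conjugate of the
convex loss `ℓᵢ`), if `−ŵᵀxᵢ` is a subgradient of `gᵢ` at `α̂ᵢ` (with `gᵢ(α̂ᵢ)` finite) for
every `i`, then `w̄ = ∑ α̂ᵢxᵢ` globally minimizes the perturbed primal objective
`w ↦ (1/2)‖w‖² + ∑ ℓᵢ((w − ε)ᵀxᵢ)`, where `ε = w̄ − ŵ`. -/
theorem backward_error_primal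
    (n d : ℕ) (hn : 1 ≤ n) (hd : 1 ≤ d)
    (x : Fin n → EuclideanSpace ℝ (Fin d)) (hx : ∀ i, x i ≠ 0)
    (ℓ : Fin n → ℝ → ℝ)
    (hconv : ∀ i, ConvexOn ℝ Set.univ (ℓ i))
    (g : Fin n → ℝ → EReal)
    (hg : ∀ i, ∀ a : ℝ, g i a = ⨆ z : ℝ, ((z * (-a) - ℓ i z : ℝ) : EReal))
    (αhat : Fin n → ℝ) (what : EuclideanSpace ℝ (Fin d))
    (hfin : ∀ i, g i (αhat i) ≠ ⊤)
    (hsubgrad : ∀ i, ∀ z : ℝ,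
      g i (αhat i) + (((-⟪what, x i⟫) * (z - αhat i) : ℝ) : EReal) ≤ g i z)
    (wbar : EuclideanSpace ℝ (Fin d)) (hwbar : wbar = ∑ i, αhat i • x i)
    (ε : EuclideanSpace ℝ (Fin d)) (hε : ε = wbar - what) :
    ∀ w : EuclideanSpace ℝ (Fin d),
      (1 / 2) * ‖wbar‖ ^ 2 + ∑ i, ℓ i ⟪wbar - ε, x i⟫
        ≤ (1 / 2) * ‖w‖ ^ 2 + ∑ i, ℓ i ⟪w - ε, x i⟫ := by
  intro w
  have hweps : wbar - ε = what := by rw [hε]; abel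
  -- Key pointwise inequality: `⟪what, x i⟫` minimizes `u ↦ ℓ i u + αhat i * u`.
  have key : ∀ i, ∀ u : ℝ,
      ℓ i ⟪what, x i⟫ + αhat i * ⟪what, x i⟫ ≤ ℓ i u + αhat i * u := by
    intro i u
    set c : ℝ := ⟪what, x i⟫ with hcc
    obtain ⟨m, hmsub⟩ := exists_subgradient_of_convexOn (ℓ i) (hconv i) c
    have hbot : g i (αhat i) ≠ ⊥ := by
      rw [hg i (αhat i)]
      intro h
      have h0 := le_iSup (fun z : ℝ => ((z * (-(αhat i)) - ℓ i z : ℝ) : EReal)) 0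
      rw [h, le_bot_iff] at h0
      exact (EReal.coe_ne_bot _) h0
    obtain ⟨G, hG⟩ : ∃ G : ℝ, g i (αhat i) = (G : EReal) :=
      ⟨(g i (αhat i)).toReal, (EReal.coe_toReal (hfin i) hbot).symm⟩
    -- lower bound: `-αhat i * u - ℓ i u ≤ G`
    have bound1 : u * (-(αhat i)) - ℓ i u ≤ G := by
      have h1 : ((u * (-(αhat i)) - ℓ i u : ℝ) : EReal) ≤ (G : EReal) := by
        rw [← hG, hg i (αhat i)]
        exact le_iSup (fun z : ℝ => ((z * (-(αhat i)) - ℓ i z : ℝ) : EReal)) u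
      exact_mod_cast h1
    -- upper bound on `g i (-m)`
    have bound2 : g i (-m) ≤ ((c * m - ℓ i c : ℝ) : EReal) := by
      rw [hg i (-m)]
      apply iSup_le
      intro z
      have hz := hmsub z
      have : z * (-(-m)) - ℓ i z ≤ c * m - ℓ i c := by nlinarith
      exact_mod_cast this
    have bound3 : G + (-c) * (-m - αhat i) ≤ c * m - ℓ i c := by
      have h2 := (hsubgrad i (-m)).trans bound2
      rw [hG, ← EReal.coe_add] at h2
      exact_mod_cast h2
    nlinarith [bound1, bound3]
  -- Sum the key inequality
  have hsum : ∑ i, (ℓ i ⟪what, x i⟫ + αhat i * ⟪what, x i⟫)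
      ≤ ∑ i, (ℓ i ⟪w - ε, x i⟫ + αhat i * ⟪w - ε, x i⟫) :=
    Finset.sum_le_sum fun i _ => key i ⟪w - ε, x i⟫
  rw [Finset.sum_add_distrib, Finset.sum_add_distrib] at hsum
  have hinner1 : ∑ i, αhat i * ⟪what, x i⟫ = ⟪what, wbar⟫ := by
    rw [hwbar, inner_sum]
    exact Finset.sum_congr rfl fun i _ => (real_inner_smul_right _ _ _).symm
  have hinner2 : ∑ i, αhat i * ⟪w - ε, x i⟫ = ⟪w - ε, wbar⟫ := by
    rw [hwbar, inner_sum]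
    exact Finset.sum_congr rfl fun i _ => (real_inner_smul_right _ _ _).symm
  rw [hinner1, hinner2] at hsum
  -- inner product identities
  have hid1 : ⟪w - ε, wbar⟫ = ⟪w, wbar⟫ - ⟪ε, wbar⟫ := inner_sub_left _ _ _
  have hid2 : ⟪what, wbar⟫ = ⟪wbar, wbar⟫ - ⟪ε, wbar⟫ := by
    have : what = wbar - ε := hweps.symm
    rw [this, inner_sub_left]
  have hsq : ‖w - wbar‖ ^ 2 = ‖w‖ ^ 2 - 2 * ⟪w, wbar⟫ + ‖wbar‖ ^ 2 := norm_sub_sq_real w wbar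
  have hself : ⟪wbar, wbar⟫ = ‖wbar‖ ^ 2 := real_inner_self_eq_norm_sq wbar
  have hnn : (0 : ℝ) ≤ ‖w - wbar‖ ^ 2 := sq_nonneg _
  rw [hweps]
  nlinarith [hsum]
end

section
/- (Corollary of the backward error analysis.) Suppose ℓᵢ : ℝ → ℝ are convex functions, gᵢ(α) := ℓᵢ*(−α) where ℓᵢ*(u) = sup_{z ∈ ℝ} (z·u − ℓᵢ(z)) is the convex conjugate (with values in ℝ ∪ {+∞}), and α̂ ∈ ℝⁿ, ŵ ∈ ℝ^d satisfy: for every i, gᵢ(α̂ᵢ) is finite and gᵢ(z) ≥ gᵢ(α̂ᵢ) + (−ŵᵀxᵢ)·(z − α̂ᵢ) for all z ∈ ℝ. Let ε = (∑_{i=1}^n α̂ᵢ xᵢ) − ŵ. Then ŵ is a global minimizer over ℝ^d of the perturbed primal objective w ↦ (1/2)·‖w + ε‖² + ∑_{i=1}^n ℓᵢ(wᵀxᵢ). -/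
open scoped RealInnerProductSpace

lemma exists_subgrad {f : ℝ → ℝ} (hf : ConvexOn ℝ Set.univ f) (t : ℝ) :
    ∃ s : ℝ, ∀ y : ℝ, f t + s * (y - t) ≤ f y := by
  set A : Set ℝ := (fun y => (f t - f y) / (t - y)) '' Set.Iio t with hA
  have hAne : A.Nonempty := ⟨_, ⟨t - 1, by simp, rfl⟩⟩
  have hub : ∀ z : ℝ, t < z → ∀ a ∈ A, a ≤ (f z - f t) / (z - t) := by
    rintro z hz a ⟨y, hy, rfl⟩
    exact hf.slope_mono_adjacent (Set.mem_univ y) (Set.mem_univ z) hy hz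
  have hbdd : BddAbove A := ⟨(f (t+1) - f t) / (t + 1 - t), fun a ha => hub (t+1) (by linarith) a ha⟩
  refine ⟨sSup A, fun y => ?_⟩
  rcases lt_trichotomy y t with h | h | h
  · have h1 : (f t - f y) / (t - y) ≤ sSup A := le_csSup hbdd ⟨y, h, rfl⟩
    have h2 : f t - f y ≤ sSup A * (t - y) := by
      rw [div_le_iff₀ (by linarith)] at h1; linarith [h1]
    nlinarith [h2]
  · simp [h]
  · have h1 : sSup A ≤ (f y - f t) / (y - t) := csSup_le hAne (hub y h)
    have h2 : sSup A * (y - t) ≤ f y - f t := by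
      rw [le_div_iff₀ (by linarith)] at h1; linarith [h1]
    linarith

/-- Corollary of the backward error analysis. With `gᵢ(α) = ℓᵢ*(−α)` (convex conjugate of
the convex loss `ℓᵢ`), if `−ŵᵀxᵢ` is a subgradient of `gᵢ` at `α̂ᵢ` (with `gᵢ(α̂ᵢ)` finite)
for every `i`, and `ε = (∑ α̂ᵢxᵢ) − ŵ`, then `ŵ` globally minimizes the perturbed primal
objective `w ↦ (1/2)‖w + ε‖² + ∑ ℓᵢ(wᵀxᵢ)`. -/
theorem backward_error_primal_cor
    (n d : ℕ) (hn : 1 ≤ n) (hd : 1 ≤ d)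
    (x : Fin n → EuclideanSpace ℝ (Fin d)) (hx : ∀ i, x i ≠ 0)
    (ℓ : Fin n → ℝ → ℝ)
    (hconv : ∀ i, ConvexOn ℝ Set.univ (ℓ i))
    (g : Fin n → ℝ → EReal)
    (hg : ∀ i, ∀ a : ℝ, g i a = ⨆ z : ℝ, ((z * (-a) - ℓ i z : ℝ) : EReal))
    (αhat : Fin n → ℝ) (what : EuclideanSpace ℝ (Fin d))
    (hfin : ∀ i, g i (αhat i) ≠ ⊤)
    (hsubgrad : ∀ i, ∀ z : ℝ,
      g i (αhat i) + (((-⟪what, x i⟫) * (z - αhat i) : ℝ) : EReal) ≤ g i z)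
    (ε : EuclideanSpace ℝ (Fin d)) (hε : ε = (∑ i, αhat i • x i) - what) :
    ∀ w : EuclideanSpace ℝ (Fin d),
      (1 / 2) * ‖what + ε‖ ^ 2 + ∑ i, ℓ i ⟪what, x i⟫
        ≤ (1 / 2) * ‖w + ε‖ ^ 2 + ∑ i, ℓ i ⟪w, x i⟫ := by
  intro w
  -- per-index key inequality
  have key : ∀ i, ℓ i ⟪what, x i⟫ - ℓ i ⟪w, x i⟫
      ≤ αhat i * (⟪w, x i⟫ - ⟪what, x i⟫) := by
    intro i
    set t : ℝ := ⟪what, x i⟫ with ht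
    -- g i (αhat i) is a real number r
    have hnb : g i (αhat i) ≠ ⊥ := by
      have h0 : ((0 * (-(αhat i)) - ℓ i 0 : ℝ) : EReal) ≤ g i (αhat i) := by
        rw [hg i]; exact le_iSup (fun z : ℝ => ((z * (-(αhat i)) - ℓ i z : ℝ) : EReal)) 0
      intro hb; rw [hb] at h0
      exact absurd h0 (by simp [EReal.bot_lt_coe])
    set r : ℝ := (g i (αhat i)).toReal with hr
    have hgr : g i (αhat i) = (r : EReal) := (EReal.coe_toReal (hfin i) hnb).symm
    -- Fenchel: ∀ v, v*(-αhat i) - ℓ i v ≤ r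
    have hA : ∀ v : ℝ, v * (-(αhat i)) - ℓ i v ≤ r := by
      intro v
      have : ((v * (-(αhat i)) - ℓ i v : ℝ) : EReal) ≤ (r : EReal) := by
        rw [← hgr, hg i]
        exact le_iSup (fun z : ℝ => ((z * (-(αhat i)) - ℓ i z : ℝ) : EReal)) v
      exact_mod_cast this
    -- subgradient s of ℓ i at t
    obtain ⟨s, hs⟩ := exists_subgrad (hconv i) t
    -- g i (-s) ≤ s*t - ℓ i t
    have hB : g i (-s) ≤ ((s * t - ℓ i t : ℝ) : EReal) := by
      rw [hg i]
      refine iSup_le fun y => ?_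
      have := hs y
      exact EReal.coe_le_coe_iff.2 (by nlinarith [hs y])
    -- combine with hsubgrad at z = -s
    have hC := hsubgrad i (-s)
    rw [hgr] at hC
    have hC' : ((r + (-t) * (-s - αhat i) : ℝ) : EReal) ≤ ((s * t - ℓ i t : ℝ) : EReal) := by
      calc ((r + (-t) * (-s - αhat i) : ℝ) : EReal)
          = (r : EReal) + (((-t) * (-s - αhat i) : ℝ) : EReal) := by
            rw [EReal.coe_add]
        _ ≤ g i (-s) := hC
        _ ≤ _ := hB
    have hC'' : r + (-t) * (-s - αhat i) ≤ s * t - ℓ i t := by exact_mod_cast hC'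
    -- hence ℓ i t ≤ -αhat i * t - r
    have hwhat : ℓ i t ≤ -(αhat i) * t - r := by nlinarith [hC'']
    have hw : -(αhat i) * ⟪w, x i⟫ - r ≤ ℓ i ⟪w, x i⟫ := by
      have := hA ⟪w, x i⟫; nlinarith [this]
    nlinarith [hwhat, hw]
  -- sum the inequalities
  have hsum : ∑ i, ℓ i ⟪what, x i⟫ - ∑ i, ℓ i ⟪w, x i⟫
      ≤ ⟪w - what, ∑ i, αhat i • x i⟫ := by
    have h1 : ⟪w - what, ∑ i, αhat i • x i⟫
        = ∑ i, αhat i * (⟪w, x i⟫ - ⟪what, x i⟫) := by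
      rw [inner_sum]
      refine Finset.sum_congr rfl fun i _ => ?_
      rw [real_inner_smul_right, inner_sub_left]
    rw [h1, ← Finset.sum_sub_distrib]
    exact Finset.sum_le_sum fun i _ => key i
  -- quadratic algebra
  set sv : EuclideanSpace ℝ (Fin d) := ∑ i, αhat i • x i with hsv
  have hwe : what + ε = sv := by rw [hε]; abel
  have hwe2 : w + ε = sv + (w - what) := by rw [hε]; abel
  rw [hwe, hwe2, norm_add_sq_real]
  have hinner : ⟪w - what, sv⟫ = ⟪sv, w - what⟫ := real_inner_comm _ _
  have hnn : (0:ℝ) ≤ ‖w - what‖ ^ 2 := sq_nonneg _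
  rw [hinner] at hsum
  linarith [hsum, hnn]
end

section
/- (Non-expansiveness of the coordinate update operator.) Let g : ℝ → ℝ ∪ {+∞} be a convex, proper, lower semicontinuous function and let x ∈ ℝ^d be nonzero. For w ∈ ℝ^d and s ∈ ℝ, suppose u₁ is the unique minimizer over u ∈ ℝ of (1/2)·‖w₁ + (u − s₁)x‖² + g(u) and u₂ is the unique minimizer over u ∈ ℝ of (1/2)·‖w₂ + (u − s₂)x‖² + g(u). Then |u₁ − u₂| ≤ |(s₁ − s₂) − (w₁ − w₂)ᵀx/‖x‖²|. -/
open scoped RealInnerProductSpace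

/-!
At a minimizer `u` of `q + g` with `g` convex, comparing with the points `θ v + (1 - θ) u` and
letting `θ → 0⁺` gives the variational inequality `g u - g v ≤ (v - u) q'(u)`, where
`q'(u) = ⟪w + (u - s) x, x⟫`. Adding the two inequalities for `(u₁, u₂)` and `(u₂, u₁)`, the values
of `g` cancel and `‖x‖² (u₁ - u₂)² ≤ (u₁ - u₂) (‖x‖² (s₁ - s₂) - ⟪w₁ - w₂, x⟫)`: the
one-dimensional proximal map is firmly nonexpansive.
-/

open Filter Topology Set

theorem le_of_forall_mem_Ioc_le_add_mul {a b c : ℝ}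
    (h : ∀ θ ∈ Ioc (0 : ℝ) 1, a ≤ b + c * θ) : a ≤ b := by
  have hlim : Tendsto (fun θ : ℝ => b + c * θ) (𝓝[>] 0) (𝓝 b) := by
    have : Tendsto (fun θ : ℝ => b + c * θ) (𝓝 0) (𝓝 (b + c * 0)) :=
      (continuous_const.add (continuous_const.mul continuous_id)).tendsto 0
    simpa using this.mono_left nhdsWithin_le_nhds
  exact ge_of_tendsto hlim (eventually_of_mem (Ioc_mem_nhdsGT one_pos) h)

theorem abs_le_abs_of_sq_le_mul {t s : ℝ} (h : t ^ 2 ≤ t * s) : |t| ≤ |s| := by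
  nlinarith [abs_mul_abs_self t, abs_nonneg t, abs_nonneg s, le_abs_self (t * s), abs_mul t s]

theorem EReal.ne_top_of_forall_add_le {α : Type*} {q : α → ℝ} {g : α → EReal} {u : α}
    (hmin : ∀ y, (q u : EReal) + g u ≤ q y + g y) (hg : ∃ z, g z ≠ ⊤) : g u ≠ ⊤ := by
  obtain ⟨z, hz⟩ := hg
  intro htop
  have := hmin z
  rw [htop, EReal.coe_add_top, top_le_iff] at this
  exact EReal.add_ne_top (EReal.coe_ne_top _) hz this

theorem sub_le_of_forall_add_le_of_convex {q : ℝ → ℝ} {g : ℝ → EReal} {u v Gu Gv D K : ℝ}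
    (hconv : ∀ θ : ℝ, 0 ≤ θ → θ ≤ 1 →
      g (θ * v + (1 - θ) * u) ≤ (θ : EReal) * g v + ((1 - θ : ℝ) : EReal) * g u)
    (hmin : ∀ y, (q u : EReal) + g u ≤ q y + g y) (hGu : g u = Gu) (hGv : g v = Gv)
    (hq : ∀ θ : ℝ, q (θ * v + (1 - θ) * u) = q u + θ * D + θ ^ 2 * K) :
    Gu - Gv ≤ D := by
  refine le_of_forall_mem_Ioc_le_add_mul (c := K) fun θ ⟨hθ0, hθ1⟩ => ?_
  have hstep : q u + Gu ≤ q (θ * v + (1 - θ) * u) + (θ * Gv + (1 - θ) * Gu) := by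
    have h := (hmin (θ * v + (1 - θ) * u)).trans
      (add_le_add_right (hconv θ hθ0.le hθ1) _)
    rw [hGu, hGv] at h
    exact_mod_cast h
  rw [hq] at hstep
  have : θ * (Gu - Gv) ≤ θ * (D + K * θ) := by linarith
  exact le_of_mul_le_mul_left this hθ0

variable {E : Type*} [NormedAddCommGroup E] [InnerProductSpace ℝ E]

theorem half_norm_add_smul_sq (y x : E) (t : ℝ) :
    1 / 2 * ‖y + t • x‖ ^ 2 = 1 / 2 * ‖y‖ ^ 2 + t * ⟪y, x⟫ + t ^ 2 * (‖x‖ ^ 2 / 2) := by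
  rw [norm_add_sq_real, real_inner_smul_right, norm_smul, mul_pow, Real.norm_eq_abs, sq_abs]
  ring

theorem half_norm_add_sub_smul_sq_segment (w x : E) (s u v θ : ℝ) :
    1 / 2 * ‖w + (θ * v + (1 - θ) * u - s) • x‖ ^ 2
      = 1 / 2 * ‖w + (u - s) • x‖ ^ 2 + θ * ((v - u) * ⟪w + (u - s) • x, x⟫)
        + θ ^ 2 * ((v - u) ^ 2 * (‖x‖ ^ 2 / 2)) := by
  have hpt : w + (θ * v + (1 - θ) * u - s) • x = (w + (u - s) • x) + (θ * (v - u)) • x := by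
    module
  rw [hpt, half_norm_add_smul_sq]
  ring

theorem coordinate_update_nonexpansive_general
    (d : ℕ)
    (g : ℝ → EReal)
    (hconv : ∀ a b θ : ℝ, 0 ≤ θ → θ ≤ 1 →
      g (θ * a + (1 - θ) * b) ≤ (θ : EReal) * g a + ((1 - θ : ℝ) : EReal) * g b)
    (hproper_bot : ∀ z, g z ≠ ⊥) (hproper_top : ∃ z, g z ≠ ⊤)
    (x : EuclideanSpace ℝ (Fin d)) (hx : x ≠ 0)
    (w₁ w₂ : EuclideanSpace ℝ (Fin d)) (s₁ s₂ u₁ u₂ : ℝ)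
    (hu₁min : ∀ u : ℝ,
      (((1 / 2) * ‖w₁ + (u₁ - s₁) • x‖ ^ 2 : ℝ) : EReal) + g u₁
        ≤ (((1 / 2) * ‖w₁ + (u - s₁) • x‖ ^ 2 : ℝ) : EReal) + g u)
    (hu₂min : ∀ u : ℝ,
      (((1 / 2) * ‖w₂ + (u₂ - s₂) • x‖ ^ 2 : ℝ) : EReal) + g u₂
        ≤ (((1 / 2) * ‖w₂ + (u - s₂) • x‖ ^ 2 : ℝ) : EReal) + g u) :
    |u₁ - u₂| ≤ |(s₁ - s₂) - ⟪w₁ - w₂, x⟫ / ‖x‖ ^ 2| := by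
  set q₁ : ℝ → ℝ := fun u => 1 / 2 * ‖w₁ + (u - s₁) • x‖ ^ 2
  set q₂ : ℝ → ℝ := fun u => 1 / 2 * ‖w₂ + (u - s₂) • x‖ ^ 2
  have hG₁ := (EReal.coe_toReal
    (EReal.ne_top_of_forall_add_le (q := q₁) hu₁min hproper_top) (hproper_bot u₁)).symm
  have hG₂ := (EReal.coe_toReal
    (EReal.ne_top_of_forall_add_le (q := q₂) hu₂min hproper_top) (hproper_bot u₂)).symm
  have key₁ := sub_le_of_forall_add_le_of_convex (q := q₁) (hconv u₂ u₁) hu₁min hG₁ hG₂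
    (half_norm_add_sub_smul_sq_segment w₁ x s₁ u₁ u₂)
  have key₂ := sub_le_of_forall_add_le_of_convex (q := q₂) (hconv u₁ u₂) hu₂min hG₂ hG₁
    (half_norm_add_sub_smul_sq_segment w₂ x s₂ u₂ u₁)
  have hsum : ‖x‖ ^ 2 * (u₁ - u₂) ^ 2 ≤ (u₁ - u₂) * (‖x‖ ^ 2 * (s₁ - s₂) - ⟪w₁ - w₂, x⟫) := by
    simp only [inner_add_left, real_inner_smul_left, real_inner_self_eq_norm_sq, inner_sub_left]
      at key₁ key₂ ⊢
    linarith
  have ha : 0 < ‖x‖ ^ 2 := by positivity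
  refine abs_le_abs_of_sq_le_mul (le_of_mul_le_mul_left ?_ ha)
  calc ‖x‖ ^ 2 * (u₁ - u₂) ^ 2
      ≤ (u₁ - u₂) * (‖x‖ ^ 2 * (s₁ - s₂) - ⟪w₁ - w₂, x⟫) := hsum
    _ = ‖x‖ ^ 2 * ((u₁ - u₂) * ((s₁ - s₂) - ⟪w₁ - w₂, x⟫ / ‖x‖ ^ 2)) := by
      field_simp

/-- Non-expansiveness of the coordinate update operator: if `u₁`, `u₂` are the unique
minimizers of `u ↦ (1/2)‖wⱼ + (u − sⱼ)x‖² + g(u)` (for `j = 1, 2`), where `g` is convex,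
proper and lower semicontinuous, then `|u₁ − u₂| ≤ |(s₁ − s₂) − (w₁ − w₂)ᵀx/‖x‖²|`. -/
theorem coordinate_update_nonexpansive
    (d : ℕ) (hd : 1 ≤ d)
    (g : ℝ → EReal)
    (hconv : ∀ a b θ : ℝ, 0 ≤ θ → θ ≤ 1 →
      g (θ * a + (1 - θ) * b) ≤ (θ : EReal) * g a + ((1 - θ : ℝ) : EReal) * g b)
    (hproper_bot : ∀ z, g z ≠ ⊥) (hproper_top : ∃ z, g z ≠ ⊤)
    (hlsc : LowerSemicontinuous g)
    (x : EuclideanSpace ℝ (Fin d)) (hx : x ≠ 0)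
    (w₁ w₂ : EuclideanSpace ℝ (Fin d)) (s₁ s₂ u₁ u₂ : ℝ)
    (hu₁min : ∀ u : ℝ,
      (((1 / 2) * ‖w₁ + (u₁ - s₁) • x‖ ^ 2 : ℝ) : EReal) + g u₁
        ≤ (((1 / 2) * ‖w₁ + (u - s₁) • x‖ ^ 2 : ℝ) : EReal) + g u)
    (hu₁uniq : ∀ u : ℝ,
      (((1 / 2) * ‖w₁ + (u - s₁) • x‖ ^ 2 : ℝ) : EReal) + g u
        ≤ (((1 / 2) * ‖w₁ + (u₁ - s₁) • x‖ ^ 2 : ℝ) : EReal) + g u₁ → u = u₁)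
    (hu₂min : ∀ u : ℝ,
      (((1 / 2) * ‖w₂ + (u₂ - s₂) • x‖ ^ 2 : ℝ) : EReal) + g u₂
        ≤ (((1 / 2) * ‖w₂ + (u - s₂) • x‖ ^ 2 : ℝ) : EReal) + g u)
    (hu₂uniq : ∀ u : ℝ,
      (((1 / 2) * ‖w₂ + (u - s₂) • x‖ ^ 2 : ℝ) : EReal) + g u
        ≤ (((1 / 2) * ‖w₂ + (u₂ - s₂) • x‖ ^ 2 : ℝ) : EReal) + g u₂ → u = u₂) :
    |u₁ - u₂| ≤ |(s₁ - s₂) - ⟪w₁ - w₂, x⟫ / ‖x‖ ^ 2| :=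
  coordinate_update_nonexpansive_general d g hconv hproper_bot hproper_top x hx w₁ w₂ s₁ s₂ u₁ u₂
    hu₁min hu₂min
end

section
/- Let n ≥ 1, τ ∈ ℕ, and M ≥ 1 be real. Set q = 6(τ+1)eM/√n (e is Euler's number), ρ = (1+q)², and θ = ∑_{t=1}^{τ} ρ^{t/2}. If q(τ+1) ≤ 1, then ρ^{−1} ≤ 1 − (4 + 4M + 4Mθ)/√n. -/
/-! Since `1 + q ≤ e^q` and `t q ≤ 1` for `t ≤ τ`, every term of `θ` is at most `e`, so the
numerator `4 + 4M + 4Mθ` is at most `4(τ+1)eM`, and its quotient by `√n` at most `2q/3`.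
It then remains to see that `(1+q)⁻² ≤ 1 - 2q/3` for `0 ≤ q ≤ 1`, which amounts to
`q (4 - q - 2q²) ≥ 0`. -/

open Real Finset

lemma one_add_pow_le_exp_mul {q : ℝ} (hq : -1 ≤ q) (t : ℕ) : (1 + q) ^ t ≤ exp (t * q) :=
  calc (1 + q) ^ t ≤ exp q ^ t :=
        pow_le_pow_left₀ (by linarith) (by linarith [add_one_le_exp q]) t
    _ = exp (t * q) := (exp_nat_mul q t).symm

lemma sum_Icc_one_add_pow_le {q : ℝ} {τ : ℕ} (hq : 0 ≤ q) (hτq : τ * q ≤ 1) :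
    ∑ t ∈ Icc 1 τ, (1 + q) ^ t ≤ τ * exp 1 := by
  calc ∑ t ∈ Icc 1 τ, (1 + q) ^ t ≤ ∑ _t ∈ Icc 1 τ, exp 1 := by
        refine sum_le_sum fun t ht => (one_add_pow_le_exp_mul (by linarith) t).trans ?_
        have htτ : (t : ℝ) ≤ τ := by exact_mod_cast (mem_Icc.mp ht).2
        exact exp_le_exp.mpr (by nlinarith)
    _ = τ * exp 1 := by simp

lemma inv_one_add_sq_le {q : ℝ} (hq0 : 0 ≤ q) (hq1 : q ≤ 1) :
    ((1 + q) ^ 2)⁻¹ ≤ 1 - 2 * q / 3 := by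
  rw [inv_le_iff_one_le_mul₀ (by positivity)]
  nlinarith [mul_nonneg hq0 (show 0 ≤ 4 - q - 2 * q ^ 2 by nlinarith)]

theorem rho_inv_bound_general
    (n : ℕ) (τ : ℕ) (M : ℝ) (hM : 1 ≤ M)
    (q ρ θ : ℝ)
    (hq : q = 6 * (τ + 1) * Real.exp 1 * M / Real.sqrt n)
    (hρ : ρ = (1 + q) ^ 2)
    (hθ : θ = ∑ t ∈ Finset.Icc 1 τ, (1 + q) ^ t)
    (hcond : q * (τ + 1) ≤ 1) :
    ρ⁻¹ ≤ 1 - (4 + 4 * M + 4 * M * θ) / Real.sqrt n := by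
  have he : 2 ≤ exp 1 := by linarith [add_one_le_exp 1]
  have hq0 : 0 ≤ q := by rw [hq]; positivity
  have hq1 : q ≤ 1 := by nlinarith [(Nat.cast_nonneg τ : (0 : ℝ) ≤ τ)]
  have hθle : θ ≤ τ * exp 1 := hθ ▸ sum_Icc_one_add_pow_le hq0 (by nlinarith)
  have hnum : 4 + 4 * M + 4 * M * θ ≤ 2 / 3 * (6 * (τ + 1) * exp 1 * M) := by
    nlinarith [mul_le_mul_of_nonneg_left hθle (by linarith : (0 : ℝ) ≤ 4 * M),
      mul_le_mul_of_nonneg_left he (by linarith : (0 : ℝ) ≤ 4 * M)]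
  have hfrac : (4 + 4 * M + 4 * M * θ) / √n ≤ 2 * q / 3 := by
    rw [hq, mul_div_assoc', div_div, mul_comm (√n : ℝ) 3, ← div_div, mul_div_right_comm]
    exact div_le_div_of_nonneg_right hnum (sqrt_nonneg _)
  calc ρ⁻¹ ≤ 1 - 2 * q / 3 := hρ ▸ inv_one_add_sq_le hq0 hq1
    _ ≤ 1 - (4 + 4 * M + 4 * M * θ) / √n := by linarith

/-- Let `q = 6(τ+1)eM/√n`, `ρ = (1+q)²` and `θ = ∑_{t=1}^{τ} ρ^{t/2} = ∑_{t=1}^{τ} (1+q)^t`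
with `M ≥ 1`. If `q(τ+1) ≤ 1`, then `ρ⁻¹ ≤ 1 − (4 + 4M + 4Mθ)/√n`. -/
theorem rho_inv_bound
    (n : ℕ) (hn : 1 ≤ n) (τ : ℕ) (M : ℝ) (hM : 1 ≤ M)
    (q ρ θ : ℝ)
    (hq : q = 6 * (τ + 1) * Real.exp 1 * M / Real.sqrt n)
    (hρ : ρ = (1 + q) ^ 2)
    (hθ : θ = ∑ t ∈ Finset.Icc 1 τ, (1 + q) ^ t)
    (hcond : q * (τ + 1) ≤ 1) :
    ρ⁻¹ ≤ 1 - (4 + 4 * M + 4 * M * θ) / Real.sqrt n :=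
  rho_inv_bound_general n τ M hM q ρ θ hq hρ hθ hcond
end

section
/- Let g₁, …, gₙ : ℝ → ℝ ∪ {+∞} be convex, proper, lower semicontinuous functions, let x₁, …, xₙ ∈ ℝ^d be nonzero, and for w ∈ ℝ^d, s ∈ ℝ, let Tₜ(w, s) be the unique minimizer over u ∈ ℝ of (1/2)·‖w + (u − s)xₜ‖² + gₜ(u). Then for all w, ŵ ∈ ℝ^d and α ∈ ℝⁿ, ∑_{t=1}^n (Tₜ(w, αₜ) − Tₜ(ŵ, αₜ))² ≤ ∑_{t=1}^n ((w − ŵ)ᵀxₜ / ‖xₜ‖²)² = ‖X̄(w − ŵ)‖², where X̄ is the n×d matrix with rows xₜᵀ/‖xₜ‖². -/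
/-!
For a fixed coordinate write `X = xₜ`. A minimizer `u` of `r ↦ ½‖w + (r - s)X‖² + g(r)`
satisfies the variational inequality `g(u) - g(b) ≤ ⟪w + (u - s)X, X⟫ (b - u)` for every `b`:
compare `u` with the points `u + θ(b - u)`, use convexity of `g`, divide by `θ` and let
`θ → 0⁺`. Adding this inequality for the minimizer `u` at `w` (with `b = v`) and for the
minimizer `v` at `ŵ` (with `b = u`) gives `‖X‖² (v - u)² ≤ (v - u) ⟪w - ŵ, X⟫`, hence
`|u - v| ≤ |⟪w - ŵ, X⟫| / ‖X‖²`.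
-/

open scoped RealInnerProductSpace
open Filter Topology

lemma sub_le_deriv_mul_of_forall_add_le {h : ℝ → ℝ} {h' : ℝ} {f : ℝ → EReal}
    {u b fu fb : ℝ} (hh : HasDerivAt h h' u)
    (hf : ∀ a c θ : ℝ, 0 ≤ θ → θ ≤ 1 →
      f (θ * a + (1 - θ) * c) ≤ (θ : EReal) * f a + ((1 - θ : ℝ) : EReal) * f c)
    (hmin : ∀ r, (h u : EReal) + f u ≤ (h r : EReal) + f r)
    (hu : f u = fu) (hb : f b = fb) :
    fu - fb ≤ h' * (b - u) := by
  set F : ℝ → ℝ := fun θ => h (u + θ * (b - u))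
  have hF : HasDerivAt F (h' * (b - u)) 0 := by
    have hline : HasDerivAt (fun θ : ℝ => u + θ * (b - u)) (b - u) 0 := by
      simpa using ((hasDerivAt_id (0 : ℝ)).mul_const (b - u)).const_add u
    exact hh.comp_of_eq 0 hline (by simp)
  have hslope : Tendsto (slope F 0) (𝓝[>] 0) (𝓝 (h' * (b - u))) :=
    (hasDerivAt_iff_tendsto_slope.mp hF).mono_left (nhdsGT_le_nhdsNE 0)
  refine ge_of_tendsto hslope ?_
  filter_upwards [Ioc_mem_nhdsGT one_pos] with θ ⟨hθ0, hθ1⟩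
  have hconv : f (u + θ * (b - u)) ≤ ((θ * fb + (1 - θ) * fu : ℝ) : EReal) := by
    have := hf b u θ hθ0.le hθ1
    rw [hu, hb, show θ * b + (1 - θ) * u = u + θ * (b - u) by ring] at this
    exact_mod_cast this
  have hcomp : h u + fu ≤ F θ + (θ * fb + (1 - θ) * fu) := by
    have := (hmin (u + θ * (b - u))).trans (add_le_add_right hconv _)
    rw [hu] at this
    exact_mod_cast this
  rw [slope_def_field, sub_zero, le_div_iff₀ hθ0]
  simp only [F, zero_mul, add_zero]
  linarith

lemma hasDerivAt_half_norm_add_smul_sq {E : Type*} [NormedAddCommGroup E]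
    [InnerProductSpace ℝ E] (w X : E) (s u : ℝ) :
    HasDerivAt (fun r : ℝ => 1 / 2 * ‖w + (r - s) • X‖ ^ 2) ⟪w + (u - s) • X, X⟫ u := by
  have hline : HasDerivAt (fun r : ℝ => w + (r - s) • X) X u := by
    simpa using ((hasDerivAt_id u).sub_const s).smul_const X |>.const_add w
  exact (hline.norm_sq.const_mul (1 / 2)).congr_deriv (by ring)

lemma exists_eq_coe_of_forall_add_le {q : ℝ → ℝ} {f : ℝ → EReal} {u : ℝ}
    (hbot : ∀ z, f z ≠ ⊥) (htop : ∃ z, f z ≠ ⊤)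
    (hmin : ∀ r, (q u : EReal) + f u ≤ (q r : EReal) + f r) :
    ∃ fu : ℝ, f u = fu := by
  obtain ⟨z, hz⟩ := htop
  have hne : f u ≠ ⊤ := by
    intro hu
    have := hmin z
    rw [hu, EReal.add_top_of_ne_bot (EReal.coe_ne_bot _), top_le_iff] at this
    exact EReal.add_ne_top (EReal.coe_ne_top _) hz this
  exact ⟨(f u).toReal, (EReal.coe_toReal hne (hbot u)).symm⟩

lemma sq_le_div_sq_of_mul_sq_le {L a c : ℝ} (hL : 0 < L) (h : L * a ^ 2 ≤ a * c) :
    a ^ 2 ≤ (c / L) ^ 2 := by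
  rw [div_pow, le_div_iff₀ (by positivity)]
  nlinarith [sq_nonneg (L * a - c), mul_le_mul_of_nonneg_left h hL.le]

lemma sq_sub_le_of_minimizes {E : Type*} [NormedAddCommGroup E] [InnerProductSpace ℝ E]
    {f : ℝ → EReal}
    (hf : ∀ a c θ : ℝ, 0 ≤ θ → θ ≤ 1 →
      f (θ * a + (1 - θ) * c) ≤ (θ : EReal) * f a + ((1 - θ : ℝ) : EReal) * f c)
    (hbot : ∀ z, f z ≠ ⊥) (htop : ∃ z, f z ≠ ⊤)
    {X : E} (hX : X ≠ 0) {s u v : ℝ} {w w' : E}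
    (hu : ∀ r, ((1 / 2 * ‖w + (u - s) • X‖ ^ 2 : ℝ) : EReal) + f u
      ≤ ((1 / 2 * ‖w + (r - s) • X‖ ^ 2 : ℝ) : EReal) + f r)
    (hv : ∀ r, ((1 / 2 * ‖w' + (v - s) • X‖ ^ 2 : ℝ) : EReal) + f v
      ≤ ((1 / 2 * ‖w' + (r - s) • X‖ ^ 2 : ℝ) : EReal) + f r) :
    (u - v) ^ 2 ≤ (⟪w - w', X⟫ / ‖X‖ ^ 2) ^ 2 := by
  obtain ⟨fu, hfu⟩ := exists_eq_coe_of_forall_add_le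
    (q := fun r => 1 / 2 * ‖w + (r - s) • X‖ ^ 2) hbot htop hu
  obtain ⟨fv, hfv⟩ := exists_eq_coe_of_forall_add_le
    (q := fun r => 1 / 2 * ‖w' + (r - s) • X‖ ^ 2) hbot htop hv
  have huv := sub_le_deriv_mul_of_forall_add_le
    (hasDerivAt_half_norm_add_smul_sq w X s u) hf hu hfu hfv
  have hvu := sub_le_deriv_mul_of_forall_add_le
    (hasDerivAt_half_norm_add_smul_sq w' X s v) hf hv hfv hfu
  simp only [inner_add_left, real_inner_smul_left, real_inner_self_eq_norm_sq] at huv hvu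
  rw [← neg_sub v u, neg_sq, inner_sub_left]
  refine sq_le_div_sq_of_mul_sq_le (by positivity) ?_
  nlinarith

theorem coordinate_update_map_contraction_general
    (n d : ℕ)
    (g : Fin n → ℝ → EReal)
    (hconv : ∀ t, ∀ a b θ : ℝ, 0 ≤ θ → θ ≤ 1 →
      g t (θ * a + (1 - θ) * b) ≤ (θ : EReal) * g t a + ((1 - θ : ℝ) : EReal) * g t b)
    (hproper_bot : ∀ t z, g t z ≠ ⊥) (hproper_top : ∀ t, ∃ z, g t z ≠ ⊤)
    (x : Fin n → EuclideanSpace ℝ (Fin d)) (hx : ∀ t, x t ≠ 0)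
    (T : Fin n → EuclideanSpace ℝ (Fin d) → ℝ → ℝ)
    (hTmin : ∀ (t : Fin n) (w : EuclideanSpace ℝ (Fin d)) (s u : ℝ),
      (((1 / 2) * ‖w + (T t w s - s) • x t‖ ^ 2 : ℝ) : EReal) + g t (T t w s)
        ≤ (((1 / 2) * ‖w + (u - s) • x t‖ ^ 2 : ℝ) : EReal) + g t u)
    (Xbar : EuclideanSpace ℝ (Fin d) → EuclideanSpace ℝ (Fin n))
    (hXbar : ∀ (z : EuclideanSpace ℝ (Fin d)) (t : Fin n), Xbar z t = ⟪z, x t⟫ / ‖x t‖ ^ 2) :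
    ∀ (w what : EuclideanSpace ℝ (Fin d)) (α : Fin n → ℝ),
      (∑ t, (T t w (α t) - T t what (α t)) ^ 2
          ≤ ∑ t, (⟪w - what, x t⟫ / ‖x t‖ ^ 2) ^ 2) ∧
      (∑ t, (⟪w - what, x t⟫ / ‖x t‖ ^ 2) ^ 2 = ‖Xbar (w - what)‖ ^ 2) := by
  intro w what α
  refine ⟨Finset.sum_le_sum fun t _ => ?_, ?_⟩
  · exact sq_sub_le_of_minimizes (hconv t) (hproper_bot t) (hproper_top t) (hx t)
      (hTmin t w (α t)) (hTmin t what (α t))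
  · simp only [EuclideanSpace.real_norm_sq_eq, hXbar]

/-- With `Tₜ(w,s)` the unique minimizer of `u ↦ (1/2)‖w + (u−s)xₜ‖² + gₜ(u)` for convex,
proper, lsc `gₜ` and nonzero `xₜ`, for all `w, ŵ, α`:
`∑ₜ (Tₜ(w,αₜ) − Tₜ(ŵ,αₜ))² ≤ ∑ₜ ((w−ŵ)ᵀxₜ/‖xₜ‖²)² = ‖X̄(w−ŵ)‖²`. -/
theorem coordinate_update_map_contraction
    (n d : ℕ) (hn : 1 ≤ n) (hd : 1 ≤ d)
    (g : Fin n → ℝ → EReal)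
    (hconv : ∀ t, ∀ a b θ : ℝ, 0 ≤ θ → θ ≤ 1 →
      g t (θ * a + (1 - θ) * b) ≤ (θ : EReal) * g t a + ((1 - θ : ℝ) : EReal) * g t b)
    (hproper_bot : ∀ t z, g t z ≠ ⊥) (hproper_top : ∀ t, ∃ z, g t z ≠ ⊤)
    (hlsc : ∀ t, LowerSemicontinuous (g t))
    (x : Fin n → EuclideanSpace ℝ (Fin d)) (hx : ∀ t, x t ≠ 0)
    (T : Fin n → EuclideanSpace ℝ (Fin d) → ℝ → ℝ)
    (hTmin : ∀ (t : Fin n) (w : EuclideanSpace ℝ (Fin d)) (s u : ℝ),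
      (((1 / 2) * ‖w + (T t w s - s) • x t‖ ^ 2 : ℝ) : EReal) + g t (T t w s)
        ≤ (((1 / 2) * ‖w + (u - s) • x t‖ ^ 2 : ℝ) : EReal) + g t u)
    (hTuniq : ∀ (t : Fin n) (w : EuclideanSpace ℝ (Fin d)) (s u : ℝ),
      (((1 / 2) * ‖w + (u - s) • x t‖ ^ 2 : ℝ) : EReal) + g t u
        ≤ (((1 / 2) * ‖w + (T t w s - s) • x t‖ ^ 2 : ℝ) : EReal) + g t (T t w s)
          → u = T t w s)
    (Xbar : EuclideanSpace ℝ (Fin d) → EuclideanSpace ℝ (Fin n))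
    (hXbar : ∀ (z : EuclideanSpace ℝ (Fin d)) (t : Fin n), Xbar z t = ⟪z, x t⟫ / ‖x t‖ ^ 2) :
    ∀ (w what : EuclideanSpace ℝ (Fin d)) (α : Fin n → ℝ),
      (∑ t, (T t w (α t) - T t what (α t)) ^ 2
          ≤ ∑ t, (⟪w - what, x t⟫ / ‖x t‖ ^ 2) ^ 2) ∧
      (∑ t, (⟪w - what, x t⟫ / ‖x t‖ ^ 2) ^ 2 = ‖Xbar (w - what)‖ ^ 2) :=
  coordinate_update_map_contraction_general n d g hconv hproper_bot hproper_top x hx T hTmin Xbar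
    hXbar
end

section
/- (Strong duality for the hinge-loss SVM.) Let P(w) = (1/2)·‖w‖² + C·∑_{i=1}^n max(0, 1 − wᵀxᵢ) for w ∈ ℝ^d, and let D(α) = (1/2)·‖∑_{i=1}^n αᵢxᵢ‖² − ∑_{i=1}^n αᵢ for α ∈ [0,C]^n. Then D attains its minimum over [0,C]^n at some α*, the vector w* = ∑_{i=1}^n αᵢ* xᵢ minimizes P over ℝ^d, and P(w*) = −D(α*). -/
open scoped RealInnerProductSpace

/-- Complementary slackness from one-variable quadratic optimality. -/
private lemma quad_cs (C a s Kq : ℝ) (hC : 0 < C) (ha0 : 0 ≤ a) (haC : a ≤ C) (hK : 0 ≤ Kq)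
    (H : ∀ t, 0 ≤ t → t ≤ C → 0 ≤ -((t - a) * s) + (1 / 2) * (t - a) ^ 2 * Kq) :
    C * max 0 s = a * s := by
  have h1 : a < C → s ≤ 0 := by
    intro haltC
    by_contra hs
    push_neg at hs
    set ε := min (C - a) (s / (Kq + 1)) with hε
    have hεpos : 0 < ε := lt_min (by linarith) (div_pos hs (by linarith))
    have hε1 : ε ≤ C - a := min_le_left _ _
    have hε2 : ε ≤ s / (Kq + 1) := min_le_right _ _
    have hε2' : ε * (Kq + 1) ≤ s := by
      rw [← le_div_iff₀ (by linarith : (0 : ℝ) < Kq + 1)]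
      exact hε2
    have hH := H (a + ε) (by linarith) (by linarith)
    have hmul : ε * (ε * (Kq + 1)) ≤ ε * s :=
      mul_le_mul_of_nonneg_left hε2' hεpos.le
    nlinarith [mul_pos hεpos hs, sq_nonneg ε]
  have h2 : 0 < a → 0 ≤ s := by
    intro ha
    by_contra hs
    push_neg at hs
    set ε := min a (-s / (Kq + 1)) with hε
    have hεpos : 0 < ε := lt_min ha (div_pos (by linarith) (by linarith))
    have hε1 : ε ≤ a := min_le_left _ _
    have hε2 : ε ≤ -s / (Kq + 1) := min_le_right _ _
    have hε2' : ε * (Kq + 1) ≤ -s := by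
      rw [← le_div_iff₀ (by linarith : (0 : ℝ) < Kq + 1)]
      exact hε2
    have hH := H (a - ε) (by linarith) (by linarith)
    have hmul : ε * (ε * (Kq + 1)) ≤ ε * (-s) :=
      mul_le_mul_of_nonneg_left hε2' hεpos.le
    nlinarith [mul_pos hεpos (neg_pos.mpr hs), sq_nonneg ε]
  rcases lt_trichotomy s 0 with hsneg | hszero | hspos
  · have ha : a = 0 := by
      by_contra h
      have : 0 < a := lt_of_le_of_ne ha0 (Ne.symm h)
      exact absurd (h2 this) (not_le.mpr hsneg)
    rw [ha, max_eq_left hsneg.le]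
    ring
  · rw [hszero]; simp
  · have ha : a = C := by
      by_contra h
      have : a < C := lt_of_le_of_ne haC h
      exact absurd (h1 this) (not_le.mpr hspos)
    rw [ha, max_eq_right hspos.le]

/-- Strong duality for the hinge-loss SVM: `D` attains its minimum over `[0,C]ⁿ` at some
`α*`, the vector `w* = ∑ αᵢ*xᵢ` minimizes the primal objective `P` over `ℝ^d`, and
`P(w*) = −D(α*)`. -/
theorem hinge_svm_strong_duality
    (n d : ℕ) (hn : 1 ≤ n) (hd : 1 ≤ d)
    (x : Fin n → EuclideanSpace ℝ (Fin d))
    (C : ℝ) (hC : 0 < C)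
    (P : EuclideanSpace ℝ (Fin d) → ℝ)
    (hP : ∀ w, P w = (1 / 2) * ‖w‖ ^ 2 + C * ∑ i, max 0 (1 - ⟪w, x i⟫))
    (D : (Fin n → ℝ) → ℝ)
    (hD : ∀ α, D α = (1 / 2) * ‖∑ i, α i • x i‖ ^ 2 - ∑ i, α i) :
    ∃ αstar : Fin n → ℝ,
      (∀ i, αstar i ∈ Set.Icc (0 : ℝ) C) ∧
      (∀ α : Fin n → ℝ, (∀ i, α i ∈ Set.Icc (0 : ℝ) C) → D αstar ≤ D α) ∧
      (∀ w : EuclideanSpace ℝ (Fin d), P (∑ i, αstar i • x i) ≤ P w) ∧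
      P (∑ i, αstar i • x i) = -D αstar := by
  classical
  have hDeq : D = fun α => (1 / 2) * ‖∑ i, α i • x i‖ ^ 2 - ∑ i, α i := funext hD
  have hDcont : Continuous D := by
    rw [hDeq]
    apply Continuous.sub
    · apply Continuous.mul continuous_const
      apply Continuous.pow
      apply Continuous.norm
      exact continuous_finset_sum _ (fun i _ => (continuous_apply i).smul continuous_const)
    · exact continuous_finset_sum _ (fun i _ => continuous_apply i)
  have hKc : IsCompact (Set.pi Set.univ fun _ : Fin n => Set.Icc (0 : ℝ) C) :=
    isCompact_univ_pi fun _ => isCompact_Icc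
  have hKne : (Set.pi Set.univ fun _ : Fin n => Set.Icc (0 : ℝ) C).Nonempty :=
    ⟨fun _ => 0, fun i _ => ⟨le_rfl, hC.le⟩⟩
  obtain ⟨αstar, hmem, hmin⟩ := hKc.exists_isMinOn hKne hDcont.continuousOn
  have hmin' : ∀ β ∈ Set.pi Set.univ fun _ : Fin n => Set.Icc (0 : ℝ) C, D αstar ≤ D β :=
    fun β hβ => hmin hβ
  have hmem' : ∀ i, αstar i ∈ Set.Icc (0 : ℝ) C := fun i => hmem i (Set.mem_univ i)
  -- inner product with a combination
  have hinner : ∀ (β : Fin n → ℝ) (u : EuclideanSpace ℝ (Fin d)),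
      ⟪u, ∑ i, β i • x i⟫ = ∑ i, β i * ⟪u, x i⟫ := by
    intro β u
    rw [inner_sum]
    exact Finset.sum_congr rfl fun i _ => real_inner_smul_right u (x i) (β i)
  -- weak duality
  have weak : ∀ (β : Fin n → ℝ), (∀ i, β i ∈ Set.Icc (0 : ℝ) C) →
      ∀ u : EuclideanSpace ℝ (Fin d), -D β ≤ P u := by
    intro β hβ u
    rw [hD, hP]
    have h1 : ∑ i, β i * (1 - ⟪u, x i⟫) ≤ ∑ i, C * max 0 (1 - ⟪u, x i⟫) := by
      apply Finset.sum_le_sum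
      intro i _
      have h0 := (hβ i).1
      have hCi := (hβ i).2
      have ha : β i * (1 - ⟪u, x i⟫) ≤ β i * max 0 (1 - ⟪u, x i⟫) :=
        mul_le_mul_of_nonneg_left (le_max_right _ _) h0
      have hb : β i * max 0 (1 - ⟪u, x i⟫) ≤ C * max 0 (1 - ⟪u, x i⟫) :=
        mul_le_mul_of_nonneg_right hCi (le_max_left _ _)
      linarith
    have h2 : (0 : ℝ) ≤ ‖u - ∑ i, β i • x i‖ ^ 2 := sq_nonneg _
    have h3 : ‖u - ∑ i, β i • x i‖ ^ 2
        = ‖u‖ ^ 2 - 2 * ⟪u, ∑ i, β i • x i⟫ + ‖∑ i, β i • x i‖ ^ 2 :=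
      norm_sub_sq_real u _
    have h4 : ∑ i, β i * (1 - ⟪u, x i⟫) = ∑ i, β i - ⟪u, ∑ i, β i • x i⟫ := by
      rw [hinner β u, ← Finset.sum_sub_distrib]
      exact Finset.sum_congr rfl fun i _ => by ring
    have h5 : ∑ i, C * max 0 (1 - ⟪u, x i⟫) = C * ∑ i, max 0 (1 - ⟪u, x i⟫) :=
      (Finset.mul_sum _ _ _).symm
    linarith
  set w := ∑ i, αstar i • x i with hw
  -- complementary slackness
  have cs : ∀ i, C * max 0 (1 - ⟪w, x i⟫) = αstar i * (1 - ⟪w, x i⟫) := by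
    intro i
    apply quad_cs C (αstar i) (1 - ⟪w, x i⟫) (‖x i‖ ^ 2) hC (hmem' i).1 (hmem' i).2
      (sq_nonneg _)
    intro t ht0 htC
    have hfeas : Function.update αstar i t ∈
        Set.pi Set.univ fun _ : Fin n => Set.Icc (0 : ℝ) C := by
      intro j _
      by_cases h : j = i
      · subst h; simpa using (⟨ht0, htC⟩ : t ∈ Set.Icc (0 : ℝ) C)
      · simpa [Function.update_of_ne h] using hmem' j
    have hle := hmin' _ hfeas
    rw [hD, hD] at hle
    have hsum1 : ∑ j, Function.update αstar i t j • x j = w + (t - αstar i) • x i := by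
      have hterm : ∀ j, Function.update αstar i t j • x j
          = αstar j • x j + (if j = i then (t - αstar i) • x i else 0) := by
        intro j
        by_cases h : j = i
        · subst h
          simp [Function.update_self, sub_smul]
        · simp [Function.update_of_ne h, h]
      rw [hw]
      calc ∑ j, Function.update αstar i t j • x j
          = ∑ j, (αstar j • x j + (if j = i then (t - αstar i) • x i else 0)) :=
            Finset.sum_congr rfl fun j _ => hterm j
        _ = (∑ j, αstar j • x j) + ∑ j, (if j = i then (t - αstar i) • x i else 0) :=
            Finset.sum_add_distrib
        _ = (∑ j, αstar j • x j) + (t - αstar i) • x i := by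
            rw [Finset.sum_ite_eq' Finset.univ i (fun _ => (t - αstar i) • x i)]
            simp
    have hsum2 : ∑ j, Function.update αstar i t j = (∑ j, αstar j) + (t - αstar i) := by
      have hterm : ∀ j, Function.update αstar i t j
          = αstar j + (if j = i then t - αstar i else 0) := by
        intro j
        by_cases h : j = i
        · subst h; simp
        · simp [Function.update_of_ne h, h]
      calc ∑ j, Function.update αstar i t j
          = ∑ j, (αstar j + (if j = i then t - αstar i else 0)) :=
            Finset.sum_congr rfl fun j _ => hterm j
        _ = (∑ j, αstar j) + ∑ j, (if j = i then t - αstar i else 0) :=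
            Finset.sum_add_distrib
        _ = (∑ j, αstar j) + (t - αstar i) := by
            rw [Finset.sum_ite_eq' Finset.univ i (fun _ => t - αstar i)]
            simp
    rw [hsum1, hsum2] at hle
    have hexp : ‖w + (t - αstar i) • x i‖ ^ 2
        = ‖w‖ ^ 2 + 2 * ((t - αstar i) * ⟪w, x i⟫) + (t - αstar i) ^ 2 * ‖x i‖ ^ 2 := by
      rw [norm_add_sq_real, real_inner_smul_right, norm_smul]
      rw [mul_pow, Real.norm_eq_abs, sq_abs]
    rw [hexp] at hle
    nlinarith [hle]
  -- the key equality
  have hww : ‖w‖ ^ 2 = ∑ i, αstar i * ⟪w, x i⟫ := by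
    rw [← real_inner_self_eq_norm_sq]
    exact hinner αstar w
  have Peq : P w = -D αstar := by
    rw [hP, hD, ← hw]
    have hCs : C * ∑ i, max 0 (1 - ⟪w, x i⟫) = (∑ i, αstar i) - ‖w‖ ^ 2 := by
      rw [Finset.mul_sum]
      calc ∑ i, C * max 0 (1 - ⟪w, x i⟫)
          = ∑ i, αstar i * (1 - ⟪w, x i⟫) := Finset.sum_congr rfl fun i _ => cs i
        _ = (∑ i, αstar i) - ∑ i, αstar i * ⟪w, x i⟫ := by
            rw [← Finset.sum_sub_distrib]
            exact Finset.sum_congr rfl fun i _ => by ring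
        _ = (∑ i, αstar i) - ‖w‖ ^ 2 := by rw [hww]
    linarith
  refine ⟨αstar, hmem', ?_, ?_, ?_⟩
  · intro β hβ
    exact hmin' β fun i _ => hβ i
  · intro u
    have := weak αstar hmem' u
    rw [← hw]
    linarith [Peq]
  · rw [← hw]; exact Peq
end

section
/- (Coordinate-minimizer residual dominates the projected gradient for the hinge-loss dual.) Assume ‖xₜ‖² ≤ 1 for all t. For α ∈ [0,C]^n define ∇ₜD(α) = w(α)ᵀxₜ − 1, the coordinate-minimizer map Tₜ(α) = Π_{[0,C]}(αₜ − ∇ₜD(α)/‖xₜ‖²), and the projected gradient ∇ₜ⁺D(α) = αₜ − Π_{[0,C]}(αₜ − ∇ₜD(α)), where Π_{[0,C]} is projection onto the interval [0,C]. Then for every α ∈ [0,C]^n, ‖α − T(α)‖₂ ≥ (1/√n)·‖∇⁺D(α)‖₂. -/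
open scoped RealInnerProductSpace

lemma key_clamp (a g s C : ℝ) (ha0 : 0 ≤ a) (haC : a ≤ C) (hs : 0 < s) (hs1 : s ≤ 1) :
    (a - min C (max 0 (a - g))) ^ 2 ≤ (a - min C (max 0 (a - g / s))) ^ 2 := by
  rcases le_total 0 g with hg | hg
  · have hgs : g ≤ g / s := by
      rw [le_div_iff₀ hs]; nlinarith
    have hgs0 : 0 ≤ g / s := le_trans hg hgs
    have h1 : min C (max 0 (a - g)) = max 0 (a - g) :=
      min_eq_right (max_le (by linarith) (by linarith))
    have h2 : min C (max 0 (a - g / s)) = max 0 (a - g / s) :=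
      min_eq_right (max_le (by linarith) (by linarith))
    rw [h1, h2]
    rcases le_total (a - g) 0 with h | h <;> rcases le_total (a - g/s) 0 with h' | h' <;>
      simp [max_eq_left, max_eq_right, h, h'] <;> nlinarith
  · have hgs : g / s ≤ g := by
      rw [div_le_iff₀ hs]; nlinarith
    have h1 : max 0 (a - g) = a - g := max_eq_right (by linarith)
    have h2 : max 0 (a - g / s) = a - g / s := max_eq_right (by linarith)
    rw [h1, h2]
    rcases le_total C (a - g) with h | h <;> rcases le_total C (a - g/s) with h' | h' <;>
      simp [min_eq_left, min_eq_right, h, h'] <;> nlinarith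

/-- The coordinate-minimizer residual dominates the projected gradient for the hinge-loss
dual: with `∇ₜD(α) = w(α)ᵀxₜ − 1`, `Tₜ(α) = Π_{[0,C]}(αₜ − ∇ₜD(α)/‖xₜ‖²)` and
`∇ₜ⁺D(α) = αₜ − Π_{[0,C]}(αₜ − ∇ₜD(α))`, assuming `‖xₜ‖² ≤ 1` for all `t`, one has
`‖α − T(α)‖₂ ≥ (1/√n)‖∇⁺D(α)‖₂` for every `α ∈ [0,C]ⁿ`. -/
theorem hinge_svm_residual_dominates_projected_gradient
    (n d : ℕ) (hn : 1 ≤ n) (hd : 1 ≤ d)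
    (x : Fin n → EuclideanSpace ℝ (Fin d)) (hx : ∀ t, x t ≠ 0)
    (hx1 : ∀ t, ‖x t‖ ^ 2 ≤ 1)
    (C : ℝ) (hC : 0 < C)
    (gradD : (Fin n → ℝ) → Fin n → ℝ)
    (hgradD : ∀ α t, gradD α t = ⟪∑ i, α i • x i, x t⟫ - 1)
    (T : (Fin n → ℝ) → Fin n → ℝ)
    (hT : ∀ α t, T α t = min C (max 0 (α t - gradD α t / ‖x t‖ ^ 2)))
    (gplus : (Fin n → ℝ) → Fin n → ℝ)
    (hgplus : ∀ α t, gplus α t = α t - min C (max 0 (α t - gradD α t))) :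
    ∀ α : Fin n → ℝ, (∀ i, α i ∈ Set.Icc (0 : ℝ) C) →
      Real.sqrt (∑ t, (α t - T α t) ^ 2)
        ≥ (1 / Real.sqrt n) * Real.sqrt (∑ t, (gplus α t) ^ 2) := by
  intro α hα
  have hsum : ∑ t, (gplus α t) ^ 2 ≤ ∑ t, (α t - T α t) ^ 2 := by
    apply Finset.sum_le_sum
    intro t _
    rw [hgplus, hT]
    exact key_clamp (α t) (gradD α t) (‖x t‖ ^ 2) C (hα t).1 (hα t).2
      (pow_pos (norm_pos_iff.mpr (hx t)) 2) (hx1 t)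
  have h1 : Real.sqrt (∑ t, (gplus α t) ^ 2) ≤ Real.sqrt (∑ t, (α t - T α t) ^ 2) :=
    Real.sqrt_le_sqrt hsum
  have hn1 : (1 : ℝ) ≤ Real.sqrt n := by
    rw [show (1 : ℝ) = Real.sqrt 1 by simp]
    exact Real.sqrt_le_sqrt (by exact_mod_cast hn)
  have hfrac : 1 / Real.sqrt n ≤ 1 := by
    rw [div_le_one (by linarith)]; exact hn1
  have hnn : 0 ≤ Real.sqrt (∑ t, (gplus α t) ^ 2) := Real.sqrt_nonneg _
  calc (1 / Real.sqrt n) * Real.sqrt (∑ t, (gplus α t) ^ 2)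
      ≤ 1 * Real.sqrt (∑ t, (gplus α t) ^ 2) := mul_le_mul_of_nonneg_right hfrac hnn
    _ = Real.sqrt (∑ t, (gplus α t) ^ 2) := one_mul _
    _ ≤ Real.sqrt (∑ t, (α t - T α t) ^ 2) := h1
end
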